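/- Let V satisfy the ISS-Lyapunov conditions α₁(‖x‖) ≤ V(x) ≤ α₂(‖x‖) and V(f(x,w)) − V(x) ≤ −α₃(‖x‖) + γ(‖w‖) on a robust positively invariant set X_A ∋ 0. If the disturbance sequence converges to zero (‖w_t‖ → 0) and α₃ ∘ α₂⁻¹ is of class K∞, then along any trajectory x_{t+1}=f(x_t,w_t) with x_0 ∈ X_A, the state converges to the origin: ‖x_t‖ → 0. -/
import Mathlib

/-- Class K: continuous on [0,∞), strictly increasing there, zero at zero. -/
def ClassK (γ : ℝ → ℝ) : Prop :=
  ContinuousOn γ (Set.Ici 0) ∧ StrictMonoOn γ (Set.Ici 0) ∧ γ 0 = 0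

/-- Class K∞: class K and unbounded. -/
def ClassKInf (α : ℝ → ℝ) : Prop :=
  ClassK α ∧ ∀ M : ℝ, ∃ s, 0 ≤ s ∧ M < α s

lemma seq_to_zero (ρ : ℝ → ℝ) (hmono : StrictMonoOn ρ (Set.Ici 0)) (hρ0 : ρ 0 = 0)
    (v g : ℕ → ℝ) (hv0 : ∀ t, 0 ≤ v t)
    (hrec : ∀ t, v (t + 1) ≤ v t - ρ (v t) + g t)
    (hg : Filter.Tendsto g Filter.atTop (nhds 0)) :
    Filter.Tendsto v Filter.atTop (nhds 0) := by
  rw [Metric.tendsto_atTop]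
  intro η hη
  set ε : ℝ := η / 3 with hε
  have hεpos : 0 < ε := by positivity
  have hεmem : ε ∈ Set.Ici (0:ℝ) := le_of_lt hεpos
  set c : ℝ := ρ ε with hc
  have hcpos : 0 < c := by
    have := hmono Set.self_mem_Ici hεmem hεpos
    rw [hρ0] at this; exact this
  have hminpos : 0 < min (c/2) ε := lt_min (by positivity) hεpos
  obtain ⟨T, hT⟩ := (Metric.tendsto_atTop.mp hg) (min (c/2) ε) hminpos
  have hTbnd : ∀ t, T ≤ t → g t < min (c/2) ε := by
    intro t ht
    have := hT t ht
    rw [Real.dist_eq, sub_zero] at this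
    exact lt_of_le_of_lt (le_abs_self _) this
  -- Step 1: some v T' ≤ ε with T' ≥ T
  have hstep1 : ∃ T', T ≤ T' ∧ v T' ≤ ε := by
    by_contra h
    push_neg at h
    have hdec : ∀ k : ℕ, v (T + k) ≤ v T - k * (c/2) := by
      intro k
      induction k with
      | zero => simp
      | succ k ih =>
        have hv := h (T + k) (Nat.le_add_right _ _)
        have hρge : c ≤ ρ (v (T + k)) :=
          (hmono.monotoneOn hεmem (le_of_lt (lt_of_lt_of_le hεpos (le_of_lt hv))) (le_of_lt hv))
        have hgle : g (T + k) < c/2 :=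
          lt_of_lt_of_le (hTbnd _ (Nat.le_add_right _ _)) (min_le_left _ _)
        have hr := hrec (T + k)
        have hstep : v (T + (k + 1)) ≤ v (T + k) - c/2 := by
          show v (T + k + 1) ≤ _
          linarith
        push_cast
        linarith
    obtain ⟨k, hk⟩ := exists_nat_gt (v T / (c/2))
    have hkc : v T < k * (c/2) := by
      rw [div_lt_iff₀ (by positivity)] at hk
      linarith
    have := hdec k
    have := hv0 (T + k)
    linarith
  obtain ⟨T', hTT', hvT'⟩ := hstep1
  -- Step 2: ∀ t ≥ T', v t ≤ 2 * ε
  have hstep2 : ∀ t, T' ≤ t → v t ≤ 2 * ε := by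
    intro t ht
    induction t, ht using Nat.le_induction with
    | base => linarith
    | succ t ht ih =>
      have hgt : g t < min (c/2) ε := hTbnd t (le_trans hTT' ht)
      have hgle1 : g t < c/2 := lt_of_lt_of_le hgt (min_le_left _ _)
      have hgle2 : g t < ε := lt_of_lt_of_le hgt (min_le_right _ _)
      have hrect := hrec t
      rcases le_or_gt (v t) ε with hle | hlt
      · have hρnn : 0 ≤ ρ (v t) := by
          have := hmono.monotoneOn Set.self_mem_Ici (hv0 t) (hv0 t)
          rw [hρ0] at this; exact this
        linarith
      · have hρge : c ≤ ρ (v t) :=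
          hmono.monotoneOn hεmem (le_of_lt (lt_of_lt_of_le hεpos (le_of_lt hlt))) (le_of_lt hlt)
        linarith
  refine ⟨T', fun t ht => ?_⟩
  rw [Real.dist_eq, sub_zero, abs_of_nonneg (hv0 t)]
  have := hstep2 t ht
  linarith

theorem stmt_13 {n m : ℕ}
    (XA : Set (EuclideanSpace ℝ (Fin n)))
    (f : EuclideanSpace ℝ (Fin n) → EuclideanSpace ℝ (Fin m) → EuclideanSpace ℝ (Fin n))
    (hRPI : ∀ x ∈ XA, ∀ w : EuclideanSpace ℝ (Fin m), f x w ∈ XA)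
    (h0XA : (0 : EuclideanSpace ℝ (Fin n)) ∈ XA)
    (V : EuclideanSpace ℝ (Fin n) → ℝ)
    (α₁ α₂ α₃ γ α₂inv : ℝ → ℝ)
    (hα₁ : ClassKInf α₁) (hα₂ : ClassKInf α₂) (hα₃ : ClassKInf α₃) (hγ : ClassK γ)
    (hα₂inv_left : ∀ s, 0 ≤ s → α₂inv (α₂ s) = s)
    (hα₂inv_right : ∀ s, 0 ≤ s → α₂ (α₂inv s) = s)
    (hcomp : ClassKInf (fun s => α₃ (α₂inv s)))
    (hlow : ∀ x ∈ XA, α₁ ‖x‖ ≤ V x) (hup : ∀ x ∈ XA, V x ≤ α₂ ‖x‖)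
    (hdiss : ∀ x ∈ XA, ∀ w : EuclideanSpace ℝ (Fin m),
      V (f x w) - V x ≤ -α₃ ‖x‖ + γ ‖w‖)
    (x : ℕ → EuclideanSpace ℝ (Fin n)) (w : ℕ → EuclideanSpace ℝ (Fin m))
    (hx0 : x 0 ∈ XA)
    (hdyn : ∀ t, x (t + 1) = f (x t) (w t))
    (hwto0 : Filter.Tendsto (fun t => ‖w t‖) Filter.atTop (nhds 0)) :
    Filter.Tendsto (fun t => ‖x t‖) Filter.atTop (nhds 0) := by
  -- membership
  have hmem : ∀ t, x t ∈ XA := by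
    intro t
    induction t with
    | zero => exact hx0
    | succ t ih => rw [hdyn t]; exact hRPI _ ih _
  set ρ : ℝ → ℝ := fun s => α₃ (α₂inv s) with hρdef
  set vv : ℕ → ℝ := fun t => V (x t) with hvdef
  set gg : ℕ → ℝ := fun t => γ ‖w t‖ with hgdef
  have hv0 : ∀ t, 0 ≤ vv t := by
    intro t
    have h1 : α₁ 0 ≤ α₁ ‖x t‖ :=
      hα₁.1.2.1.monotoneOn Set.self_mem_Ici (norm_nonneg _) (norm_nonneg _)
    rw [hα₁.1.2.2] at h1
    exact le_trans h1 (hlow _ (hmem t))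
  have hα₂nn : ∀ s : ℝ, 0 ≤ s → (0:ℝ) ≤ α₂ s := by
    intro s hs
    have := hα₂.1.2.1.monotoneOn Set.self_mem_Ici hs hs
    rw [hα₂.1.2.2] at this; exact this
  have hrec : ∀ t, vv (t + 1) ≤ vv t - ρ (vv t) + gg t := by
    intro t
    have hd := hdiss _ (hmem t) (w t)
    have hρle : ρ (vv t) ≤ α₃ ‖x t‖ := by
      have heq : α₃ ‖x t‖ = ρ (α₂ ‖x t‖) := by
        simp only [hρdef, hα₂inv_left _ (norm_nonneg _)]
      rw [heq]
      exact hcomp.1.2.1.monotoneOn (hv0 t) (hα₂nn _ (norm_nonneg _)) (hup _ (hmem t))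
    have hvv : vv (t + 1) = V (f (x t) (w t)) := by rw [hvdef]; simp [hdyn t]
    rw [hvv]
    simp only [hvdef, hgdef]
    linarith [hd, hρle]
  have hg : Filter.Tendsto gg Filter.atTop (nhds 0) := by
    have hcont := hγ.1 0 Set.self_mem_Ici
    have hmap : Filter.Tendsto (fun t => ‖w t‖) Filter.atTop (nhdsWithin 0 (Set.Ici 0)) :=
      tendsto_nhdsWithin_iff.mpr ⟨hwto0, Filter.Eventually.of_forall fun t => norm_nonneg _⟩
    have := hcont.tendsto.comp hmap
    rwa [hγ.2.2] at this
  have hvto0 : Filter.Tendsto vv Filter.atTop (nhds 0) :=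
    seq_to_zero ρ hcomp.1.2.1 hcomp.1.2.2 vv gg hv0 hrec hg
  -- final step
  rw [Metric.tendsto_atTop]
  intro η hη
  have hα₁η : 0 < α₁ η := by
    have := hα₁.1.2.1 Set.self_mem_Ici (le_of_lt hη) hη
    rw [hα₁.1.2.2] at this; exact this
  obtain ⟨N, hN⟩ := (Metric.tendsto_atTop.mp hvto0) (α₁ η) hα₁η
  refine ⟨N, fun t ht => ?_⟩
  rw [Real.dist_eq, sub_zero, abs_of_nonneg (norm_nonneg _)]
  by_contra hcon
  push_neg at hcon
  have h1 : α₁ η ≤ α₁ ‖x t‖ :=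
    hα₁.1.2.1.monotoneOn (le_of_lt hη) (norm_nonneg _) hcon
  have h2 := hlow _ (hmem t)
  have h3 := hN t ht
  rw [Real.dist_eq, sub_zero, abs_of_nonneg (hv0 t)] at h3
  linarith
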